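/- Let l ≥ 1 and s ≥ 0 be integers and let G be a K_3-free graph on n vertices. Suppose U ⊆ V(G) with |U| = s is such that G[V(G) \ U] is S_l-free, and suppose every independent set of G[V(G) \ U] has size at most ⌊(n−s)/2⌋. Then e(G) ≤ ⌈s/2⌉·⌊s/2⌋ + s·⌊(n−s)/2⌋ + ⌊(l−1)(n−s)/2⌋. -/

import Mathlib

open SimpleGraph

/-- `G` contains a copy of `H` (an injective graph homomorphism). -/
def Contains {α β : Type*} (G : SimpleGraph β) (H : SimpleGraph α) : Prop :=
  ∃ f : α ↪ β, ∀ a b, H.Adj a b → G.Adj (f a) (f b)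

/-- `G` is `H`-free. -/
def Free {α β : Type*} (G : SimpleGraph β) (H : SimpleGraph α) : Prop := ¬ Contains G H

/-- The Turán-type extremal number for a property `P` of graphs on `Fin n`. -/
noncomputable def exNum (n : ℕ) (P : SimpleGraph (Fin n) → Prop) : ℕ :=
  sSup {m | ∃ G : SimpleGraph (Fin n), P G ∧ G.edgeSet.ncard = m}

/-- The star forest consisting of `c` disjoint copies of the star `S_l`. -/
def starForest (c l : ℕ) : SimpleGraph (Fin c × (Unit ⊕ Fin l)) :=
  SimpleGraph.fromRel (fun x y => x.1 = y.1 ∧ x.2.isLeft ≠ y.2.isLeft)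

/-- The join of two graphs. -/
def join {α β : Type*} (G : SimpleGraph α) (H : SimpleGraph β) : SimpleGraph (α ⊕ β) :=
  SimpleGraph.fromRel (fun x y => match x, y with
    | Sum.inl a, Sum.inl b => G.Adj a b
    | Sum.inr a, Sum.inr b => H.Adj a b
    | _, _ => True)

/-
Split the edges of `G` into those inside `U`, those between `U` and `W = V(G) \ U`, and those
inside `W`. Inside `U` there are at most `⌈s/2⌉⌊s/2⌋` edges by Mantel's theorem. Since `G` is
triangle-free, every neighbourhood is independent, so each vertex of `U` has at most `⌊(n-s)/2⌋`
neighbours in `W`. Finally `G[W]` has maximum degree at most `l - 1`, so it has at most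
`⌊(l-1)(n-s)/2⌋` edges.
-/

open Finset

theorem contains_iff_isContained {α β : Type*} {G : SimpleGraph β} {H : SimpleGraph α} :
    Contains G H ↔ H ⊑ G :=
  isContained_iff_exists_le_comap.symm

theorem free_iff {α β : Type*} {G : SimpleGraph β} {H : SimpleGraph α} :
    _root_.Free G H ↔ H.Free G :=
  contains_iff_isContained.not

namespace SimpleGraph

variable {V : Type*} [Fintype V] {G : SimpleGraph V} [DecidableRel G.Adj]

theorem CliqueFree.card_edgeFinset_le_mantel (h : G.CliqueFree 3) :
    #G.edgeFinset ≤ (Fintype.card V + 1) / 2 * (Fintype.card V / 2) := by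
  refine (CliqueFree.card_edgeFinset_le (r := 2) h).trans_eq ?_
  obtain ⟨k, hk | hk⟩ := Nat.even_or_odd' (Fintype.card V)
  · have h1 : 2 * k % 2 = 0 := by omega
    have h2 : (2 * k + 1) / 2 = k := by omega
    have h3 : 2 * k / 2 = k := by omega
    rw [hk, h1, h2, h3, show (2 * k) ^ 2 = k * k * (2 * 2) by ring]
    simp
  · have h1 : (2 * k + 1) % 2 = 1 := by omega
    have h2 : (2 * k + 1 + 1) / 2 = k + 1 := by omega
    have h3 : (2 * k + 1) / 2 = k := by omega
    rw [hk, h1, h2, h3, show (2 * k + 1) ^ 2 = (k + 1) * k * (2 * 2) + 1 by ring]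
    simp

theorem degree_lt_of_completeBipartiteGraph_free {l : ℕ}
    (h : (completeBipartiteGraph Unit (Fin l)).Free G) (v : V) : G.degree v < l := by
  by_contra! hl
  rw [← card_neighborFinset_eq_degree] at hl
  obtain ⟨t, ht, htl⟩ := exists_subset_card_eq hl
  refine h (completeBipartiteGraph_isContained_iff.2 ⟨{v}, t, by simp, by simpa using htl, ?_⟩)
  intro a ha b hb
  simp only [coe_singleton, Set.mem_singleton_iff] at ha
  subst ha
  simpa using ht hb

theorem two_mul_card_edgeFinset_le_of_degree_le {d : ℕ} (h : ∀ v, G.degree v ≤ d) :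
    2 * #G.edgeFinset ≤ Fintype.card V * d := by
  rw [← sum_degrees_eq_twice_card_edges]
  simpa using sum_le_card_nsmul univ _ d fun v _ => h v

variable [DecidableEq V]

theorem degree_induce_coe (s : Finset V) (v : (s : Set V)) :
    (G.induce (s : Set V)).degree v = #(G.neighborFinset v ∩ s) := by
  rw [← card_neighborFinset_eq_degree, ← card_map (.subtype _)]
  congr 1
  ext
  simp

theorem sum_card_neighborFinset_inter_self (s : Finset V) :
    ∑ v ∈ s, #(G.neighborFinset v ∩ s) = 2 * #(G.induce (s : Set V)).edgeFinset := by
  rw [← sum_degrees_eq_twice_card_edges]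
  exact (s.sum_coe_sort _).symm.trans
    (Fintype.sum_equiv (Equiv.refl _) _ _ fun v => (degree_induce_coe s v).symm)

theorem sum_card_neighborFinset_inter_comm (s t : Finset V) :
    ∑ v ∈ s, #(G.neighborFinset v ∩ t) = ∑ v ∈ t, #(G.neighborFinset v ∩ s) := by
  simp only [neighborFinset_eq_filter, filter_inter, univ_inter]
  convert sum_card_bipartiteAbove_eq_sum_card_bipartiteBelow (s := s) (t := t) G.Adj using 3
  all_goals ext; simp [adj_comm]

theorem card_edgeFinset_eq_induce_add_induce_compl_add (s : Finset V) :
    #G.edgeFinset = #(G.induce (s : Set V)).edgeFinset + #(G.induce (↑sᶜ : Set V)).edgeFinset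
      + ∑ v ∈ s, #(G.neighborFinset v ∩ sᶜ) := by
  have hdeg (v : V) : G.degree v = #(G.neighborFinset v ∩ s) + #(G.neighborFinset v ∩ sᶜ) := by
    rw [← card_neighborFinset_eq_degree, ← sdiff_eq_inter_compl, card_inter_add_card_sdiff]
  have hsum := G.sum_degrees_eq_twice_card_edges
  rw [← sum_add_sum_compl s] at hsum
  simp only [hdeg, sum_add_distrib, sum_card_neighborFinset_inter_self,
    sum_card_neighborFinset_inter_comm sᶜ s] at hsum
  omega

end SimpleGraph

theorem stmt14_general (l s n : ℕ) (G : SimpleGraph (Fin n))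
    (hG3 : _root_.Free G (completeGraph (Fin 3)))
    (U : Finset (Fin n)) (hUcard : U.card = s)
    (hSl : _root_.Free (SimpleGraph.induce (↑(Uᶜ) : Set (Fin n)) G)
      (completeBipartiteGraph Unit (Fin l)))
    (hind : ∀ I : Finset (Fin n), I ⊆ Uᶜ → (∀ a ∈ I, ∀ b ∈ I, ¬ G.Adj a b) →
      I.card ≤ (n - s) / 2) :
    G.edgeSet.ncard ≤ (s + 1) / 2 * (s / 2) + s * ((n - s) / 2) + (l - 1) * (n - s) / 2 := by
  classical
  have hK3 : G.CliqueFree 3 := by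
    simpa using cliqueFree_iff_top_free.2 (free_iff.1 hG3)
  have hinside : #(G.induce (U : Set (Fin n))).edgeFinset ≤ (s + 1) / 2 * (s / 2) := by
    simpa [hUcard] using
      (hK3.comap (Embedding.induce (U : Set (Fin n))).isContained).card_edgeFinset_le_mantel
  have houtside : #(G.induce (↑Uᶜ : Set (Fin n))).edgeFinset ≤ (l - 1) * (n - s) / 2 := by
    rw [Nat.le_div_iff_mul_le two_pos]
    have := two_mul_card_edgeFinset_le_of_degree_le fun v =>
      Nat.le_sub_one_of_lt (degree_lt_of_completeBipartiteGraph_free (free_iff.1 hSl) v)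
    have hcard : Fintype.card (↑Uᶜ : Set (Fin n)) = n - s := by
      simp only [coe_sort_coe, Fintype.card_coe, card_compl, Fintype.card_fin, hUcard]
    rw [hcard] at this
    linarith
  have hindep (v : Fin n) : ∀ a ∈ G.neighborFinset v ∩ Uᶜ, ∀ b ∈ G.neighborFinset v ∩ Uᶜ,
      ¬ G.Adj a b := by
    intro a ha b hb hab
    simp only [mem_inter, mem_neighborFinset] at ha hb
    exact isIndepSet_neighborSet_of_triangleFree G hK3 v ha.1 hb.1 hab.ne hab
  have hbetween : ∑ v ∈ U, #(G.neighborFinset v ∩ Uᶜ) ≤ s * ((n - s) / 2) :=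
    calc ∑ v ∈ U, #(G.neighborFinset v ∩ Uᶜ) ≤ #U • ((n - s) / 2) :=
          sum_le_card_nsmul _ _ _ fun v _ => hind _ inter_subset_right (hindep v)
      _ = s * ((n - s) / 2) := by rw [hUcard, smul_eq_mul]
  rw [Set.ncard_eq_toFinset_card', ← edgeFinset, card_edgeFinset_eq_induce_add_induce_compl_add U]
  omega

theorem stmt14 (l s n : ℕ) (hl : 1 ≤ l) (G : SimpleGraph (Fin n))
    (hG3 : _root_.Free G (completeGraph (Fin 3)))
    (U : Finset (Fin n)) (hUcard : U.card = s)
    (hSl : _root_.Free (SimpleGraph.induce (↑(Uᶜ) : Set (Fin n)) G)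
      (completeBipartiteGraph Unit (Fin l)))
    (hind : ∀ I : Finset (Fin n), I ⊆ Uᶜ → (∀ a ∈ I, ∀ b ∈ I, ¬ G.Adj a b) →
      I.card ≤ (n - s) / 2) :
    G.edgeSet.ncard ≤ (s + 1) / 2 * (s / 2) + s * ((n - s) / 2) + (l - 1) * (n - s) / 2 :=
  stmt14_general l s n G hG3 U hUcard hSl hind
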